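/- Let D be an MHR distribution with reserve price r and φ = F_D(r) ∈ [0, 1-1/e]. Then for every k ≥ 1, ∫_0^r x·d(F_D(x)^k) ≤ r·(φ^k + ln(1-φ) + Σ_{i=1}^{k} φ^i / i) when φ < 1, with the right-hand side interpreted as 0 when φ = 0. -/

import Mathlib

/-!
Below the reserve price the hazard rate is at most `h r = 1 / r`, so the cumulative hazard at
`x ≤ r` exceeds its value at `r` by at least `(x - r) / r`. Hence `F` dominates the truncated
exponential cdf `G(x) = 1 - (1 - φ) e^{(r - x)/r}`, which solves `G' = (1 - G) / r`, takes the
value `φ` at `r` and vanishes at `t = r (1 + ln (1 - φ)) ∈ [0, r]`. Integrating by parts,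
`∫_0^r x d(F^k) = r φ^k - ∫_0^r F^k ≤ r φ^k - ∫_t^r G^k`, and the last integral is explicit:
since `G^k = 1 - (1 - G) Σ_{i<k} G^i`, the ODE makes `x - r Σ_{i<k} G^{i+1}/(i+1)` a primitive.
-/

open Real MeasureTheory intervalIntegral Set Finset

theorem integral_le_mul_of_monotoneOn {h : ℝ → ℝ} {a b : ℝ} (hab : a ≤ b)
    (hmono : MonotoneOn h (Icc a b)) : ∫ x in a..b, h x ≤ (b - a) * h b := by
  have hint : IntervalIntegrable h volume a b :=
    MonotoneOn.intervalIntegrable (by rwa [uIcc_of_le hab])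
  calc ∫ x in a..b, h x ≤ ∫ _ in a..b, h b :=
        integral_mono_on hab hint intervalIntegrable_const
          fun x hx => hmono hx (right_mem_Icc.2 hab) hx.2
    _ = (b - a) * h b := by simp

theorem integral_mul_deriv_pow_eq {F f : ℝ → ℝ} {a b : ℝ} (k : ℕ) (hab : a ≤ b)
    (hderiv : ∀ x ∈ Icc a b, HasDerivAt F (f x) x)
    (hint : IntervalIntegrable (fun x => x * ((k : ℝ) * F x ^ (k - 1) * f x)) volume a b) :
    ∫ x in a..b, x * ((k : ℝ) * F x ^ (k - 1) * f x)
      = b * F b ^ k - a * F a ^ k - ∫ x in a..b, F x ^ k := by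
  have hFk : IntervalIntegrable (fun x => F x ^ k) volume a b :=
    (ContinuousOn.pow (fun x hx => (hderiv x hx).continuousAt.continuousWithinAt) k
      ).intervalIntegrable_of_Icc hab
  have hprod : ∀ x ∈ uIcc a b, HasDerivAt (fun y => y * F y ^ k)
      (F x ^ k + x * ((k : ℝ) * F x ^ (k - 1) * f x)) x := by
    intro x hx
    rw [uIcc_of_le hab] at hx
    exact ((hasDerivAt_id' x).mul ((hderiv x hx).fun_pow k)).congr_deriv (by ring)
  rw [eq_sub_iff_add_eq, add_comm, ← integral_add hFk hint,
    integral_eq_sub_of_hasDerivAt hprod (hFk.add hint)]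

theorem nonneg_of_hasDerivAt_of_nonneg {F f : ℝ → ℝ} {a b : ℝ} (hFa : F a = 0)
    (hderiv : ∀ x ∈ Icc a b, HasDerivAt F (f x) x) (hf : ∀ x ∈ Icc a b, 0 ≤ f x) :
    ∀ x ∈ Icc a b, 0 ≤ F x := by
  have hmono : MonotoneOn F (Icc a b) :=
    monotoneOn_of_hasDerivWithinAt_nonneg (convex_Icc a b)
      (fun x hx => (hderiv x hx).continuousAt.continuousWithinAt)
      (fun x hx => (hderiv x (interior_subset hx)).hasDerivWithinAt)
      fun x hx => hf x (interior_subset hx)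
  exact fun x hx => hFa ▸ hmono (left_mem_Icc.2 (hx.1.trans hx.2)) hx hx.1

theorem integral_pow_le_of_le_on_Icc {g F : ℝ → ℝ} {a t b : ℝ} (k : ℕ) (ht : t ∈ Icc a b)
    (hg : Continuous g) (hF : ContinuousOn F (Icc a b)) (hF0 : ∀ x ∈ Icc a b, 0 ≤ F x)
    (hgF : ∀ x ∈ Icc t b, 0 ≤ g x ∧ g x ≤ F x) :
    ∫ x in t..b, g x ^ k ≤ ∫ x in a..b, F x ^ k := by
  have hFk : IntervalIntegrable (fun x => F x ^ k) volume a b :=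
    (hF.pow k).intervalIntegrable_of_Icc (ht.1.trans ht.2)
  calc ∫ x in t..b, g x ^ k ≤ ∫ x in t..b, F x ^ k := by
        refine integral_mono_on ht.2 ((hg.pow k).intervalIntegrable _ _) (hFk.mono_set ?_)
          fun x hx => pow_le_pow_left₀ (hgF x hx).1 (hgF x hx).2 k
        rw [uIcc_of_le (ht.1.trans ht.2), uIcc_of_le ht.2]
        exact Icc_subset_Icc_left ht.1
    _ ≤ ∫ x in a..b, F x ^ k := integral_mono_interval ht.1 ht.2 le_rfl
        (ae_restrict_of_forall_mem measurableSet_Ioc fun x hx =>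
          pow_nonneg (hF0 x (Ioc_subset_Icc_self hx)) k) hFk

theorem integral_pow_of_hasDerivAt_one_sub_div {G : ℝ → ℝ} {r : ℝ} (hr : r ≠ 0)
    (hG : ∀ x, HasDerivAt G ((1 - G x) / r) x) (k : ℕ) (a b : ℝ) :
    ∫ x in a..b, G x ^ k
      = b - a - r * ∑ i ∈ range k, (G b ^ (i + 1) - G a ^ (i + 1)) / ((i : ℝ) + 1) := by
  have hprim : ∀ x, HasDerivAt (fun y => y - r * ∑ i ∈ range k, G y ^ (i + 1) / ((i : ℝ) + 1))
      (G x ^ k) x := by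
    intro x
    have hterm : ∀ i ∈ range k, HasDerivAt (fun y => G y ^ (i + 1) / ((i : ℝ) + 1))
        (G x ^ i * ((1 - G x) / r)) x := by
      intro i _
      refine (((hG x).pow (i + 1)).div_const ((i : ℝ) + 1)).congr_deriv ?_
      push_cast [Nat.add_sub_cancel]
      field_simp
    refine ((hasDerivAt_id' x).sub ((HasDerivAt.fun_sum hterm).const_mul r)).congr_deriv ?_
    rw [← sum_mul]
    field_simp
    linear_combination geom_sum_mul (G x) k
  have hcont : Continuous G := continuous_iff_continuousAt.2 fun x => (hG x).continuousAt
  rw [integral_eq_sub_of_hasDerivAt (fun x _ => hprim x) ((hcont.pow k).intervalIntegrable a b)]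
  simp only [sub_div, sum_sub_distrib]
  ring

/-- The paper's `G_{φ,r}`. It is negative left of its zero `r (1 + log (1 - φ))`, so only its
restriction to `[r (1 + log (1 - φ)), r]` is (part of) a cdf. -/
noncomputable def mhrExtremalCdf (φ r x : ℝ) : ℝ := 1 - (1 - φ) * exp ((r - x) / r)

theorem continuous_mhrExtremalCdf (φ r : ℝ) : Continuous (mhrExtremalCdf φ r) := by
  unfold mhrExtremalCdf
  fun_prop

theorem hasDerivAt_mhrExtremalCdf (φ r x : ℝ) :
    HasDerivAt (mhrExtremalCdf φ r) ((1 - mhrExtremalCdf φ r x) / r) x := by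
  refine ((((hasDerivAt_id' x).const_sub r).div_const r).exp.const_mul (1 - φ)).const_sub 1
    |>.congr_deriv ?_
  simp only [mhrExtremalCdf]
  ring

theorem mhrExtremalCdf_self (φ r : ℝ) : mhrExtremalCdf φ r r = φ := by
  simp [mhrExtremalCdf]

theorem mhrExtremalCdf_eq_zero {φ r : ℝ} (hr : r ≠ 0) (hφ : φ < 1) :
    mhrExtremalCdf φ r (r * (1 + log (1 - φ))) = 0 := by
  have hexponent : (r - r * (1 + log (1 - φ))) / r = -log (1 - φ) := by
    field_simp
    ring
  rw [mhrExtremalCdf, hexponent, exp_neg, exp_log (by linarith),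
    mul_inv_cancel₀ (by linarith), sub_self]

theorem mhrExtremalCdf_nonneg {φ r x : ℝ} (hr : 0 < r) (hφ : φ < 1)
    (hx : r * (1 + log (1 - φ)) ≤ x) : 0 ≤ mhrExtremalCdf φ r x := by
  rw [← mhrExtremalCdf_eq_zero hr.ne' hφ, mhrExtremalCdf, mhrExtremalCdf]
  have h1φ : 0 ≤ 1 - φ := by linarith
  gcongr

theorem mhrExtremalCdf_le_of_monotoneOn_hazard {F h : ℝ → ℝ} {r x : ℝ}
    (hmono : MonotoneOn h (Ici 0))
    (hF : ∀ x ∈ Ici (0 : ℝ), F x = 1 - exp (-∫ t in (0 : ℝ)..x, h t))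
    (hr : 0 < r) (hres : h r = 1 / r) (hx : x ∈ Icc 0 r) :
    mhrExtremalCdf (F r) r x ≤ F x := by
  have hh_int : ∀ y, 0 ≤ y → IntervalIntegrable h volume 0 y := fun y hy =>
    MonotoneOn.intervalIntegrable (hmono.mono (by rw [uIcc_of_le hy]; exact Icc_subset_Ici_self))
  have htail : ∫ t in x..r, h t ≤ (r - x) / r := by
    have := integral_le_mul_of_monotoneOn hx.2 (hmono.mono (Icc_subset_Ici_iff hx.2 |>.2 hx.1))
    rwa [hres, mul_one_div] at this
  have hsplit := integral_add_adjacent_intervals (hh_int x hx.1)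
    ((hh_int x hx.1).symm.trans (hh_int r hr.le))
  rw [mhrExtremalCdf, hF x hx.1, hF r hr.le, sub_sub_cancel, ← exp_add]
  gcongr 1 - exp ?_
  linarith

theorem mul_one_add_log_one_sub_mem_Icc {φ r : ℝ} (hr : 0 < r)
    (hφ : φ ∈ Icc 0 (1 - 1 / exp 1)) : r * (1 + log (1 - φ)) ∈ Icc 0 r := by
  obtain ⟨hφ0, hφe⟩ := hφ
  have hφ1 : φ < 1 := by linarith [one_div_pos.2 (exp_pos 1)]
  have hlog_ge : -1 ≤ log (1 - φ) := by
    rw [le_log_iff_exp_le (by linarith), exp_neg, inv_eq_one_div]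
    linarith
  have hlog_le : log (1 - φ) ≤ 0 := log_nonpos (by linarith) (by linarith)
  exact ⟨mul_nonneg hr.le (by linarith), mul_le_of_le_one_right hr.le (by linarith)⟩

theorem stmt_19_general (k : ℕ)
    (f F h : ℝ → ℝ)
    (hf0 : ∀ x, 0 ≤ f x)
    (hmono : MonotoneOn h (Set.Ici 0))
    (hF : ∀ x ∈ Set.Ici (0:ℝ), F x = 1 - Real.exp (-∫ t in (0:ℝ)..x, h t))
    (r : ℝ) (hr : 0 < r) (hres : h r = 1 / r)
    (hφmem : F r ∈ Set.Icc 0 (1 - 1 / Real.exp 1))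
    (hderiv : ∀ x ∈ Set.Icc (0:ℝ) r, HasDerivAt F (f x) x)
    (hint : IntervalIntegrable (fun x => x * ((k : ℝ) * F x ^ (k - 1) * f x)) volume 0 r) :
    ∫ x in (0:ℝ)..r, x * ((k : ℝ) * F x ^ (k - 1) * f x)
      ≤ r * ((F r) ^ k + Real.log (1 - F r)
          + ∑ i ∈ Finset.range k, (F r) ^ (i + 1) / ((i : ℝ) + 1)) := by
  have hφ1 : F r < 1 := by linarith [hφmem.2, one_div_pos.2 (exp_pos 1)]
  have ht := mul_one_add_log_one_sub_mem_Icc hr hφmem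
  have hF0 : ∀ x ∈ Icc 0 r, 0 ≤ F x :=
    nonneg_of_hasDerivAt_of_nonneg (by simp [hF 0 self_mem_Ici]) hderiv fun x _ => hf0 x
  have hlower := integral_pow_le_of_le_on_Icc k ht (continuous_mhrExtremalCdf (F r) r)
    (fun x hx => (hderiv x hx).continuousAt.continuousWithinAt) hF0 fun x hx =>
      ⟨mhrExtremalCdf_nonneg hr hφ1 hx.1,
        mhrExtremalCdf_le_of_monotoneOn_hazard hmono hF hr hres ⟨ht.1.trans hx.1, hx.2⟩⟩
  have hG := integral_pow_of_hasDerivAt_one_sub_div hr.ne' (hasDerivAt_mhrExtremalCdf (F r) r) k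
    (r * (1 + log (1 - F r))) r
  rw [mhrExtremalCdf_self, mhrExtremalCdf_eq_zero hr.ne' hφ1] at hG
  simp only [zero_pow (Nat.succ_ne_zero _), sub_zero] at hG
  rw [integral_mul_deriv_pow_eq k hr.le hderiv hint]
  linear_combination hlower - hG

/-- Loss bound: for any MHR distribution with cdf `F`, density `f`, hazard rate `h`,
reserve price `r` and `φ = F r`, the truncated expected maximum of `k` i.i.d. draws
satisfies `∫_0^r x d(F^k) ≤ r(φ^k + ln(1-φ) + Σ_{i=1}^k φ^i/i)`. -/
theorem stmt_19 (k : ℕ) (hk : 1 ≤ k)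
    (f F h : ℝ → ℝ)
    (hf0 : ∀ x, 0 ≤ f x)
    (hhaz : ∀ x ∈ Set.Ici (0:ℝ), h x = f x / (1 - F x))
    (hmono : MonotoneOn h (Set.Ici 0))
    (hF : ∀ x ∈ Set.Ici (0:ℝ), F x = 1 - Real.exp (-∫ t in (0:ℝ)..x, h t))
    (hinth : ∀ x : ℝ, IntervalIntegrable h volume 0 x)
    (r : ℝ) (hr : 0 < r) (hres : h r = 1 / r)
    (hφmem : F r ∈ Set.Icc 0 (1 - 1 / Real.exp 1))
    (hderiv : ∀ x ∈ Set.Icc (0:ℝ) r, HasDerivAt F (f x) x)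
    (hint : IntervalIntegrable (fun x => x * ((k : ℝ) * F x ^ (k - 1) * f x)) volume 0 r) :
    ∫ x in (0:ℝ)..r, x * ((k : ℝ) * F x ^ (k - 1) * f x)
      ≤ r * ((F r) ^ k + Real.log (1 - F r)
          + ∑ i ∈ Finset.range k, (F r) ^ (i + 1) / ((i : ℝ) + 1)) :=
  stmt_19_general k f F h hf0 hmono hF r hr hres hφmem hderiv hint
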